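/- arXiv:1307.3477 — 4 statements merged into one kernel-verified Lean document; each statement's English description precedes it below -/
import Mathlib

section
/- In a nonstandard vector space X with null set Ω, if x ⊖ y ∈ Ω then x ≗ y. -/
/-- Subtraction x ⊖ y := x ⊕ (−1)y in a nonstandard vector space. -/
def nsSub {𝔽 X : Type*} [Field 𝔽] (add : X → X → X) (smul : 𝔽 → X → X)
    (x y : X) : X :=
  add x (smul (-1) y)

/-- The null set Ω = {z ⊖ z : z ∈ X}. -/
def nsOmega {𝔽 X : Type*} [Field 𝔽] (add : X → X → X) (smul : 𝔽 → X → X) :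
    Set X :=
  {w | ∃ z : X, w = nsSub add smul z z}

/-- Almost equality x ≗ y: x = y, or x = y ⊕ ω / x ⊕ ω = y for some ω ∈ Ω, or
x ⊕ ω₁ = y ⊕ ω₂ for some ω₁, ω₂ ∈ Ω. -/
def nsAeq {𝔽 X : Type*} [Field 𝔽] (add : X → X → X) (smul : 𝔽 → X → X)
    (x y : X) : Prop :=
  x = y ∨
    (∃ ω ∈ nsOmega add smul, x = add y ω ∨ add x ω = y) ∨
    (∃ ω₁ ∈ nsOmega add smul, ∃ ω₂ ∈ nsOmega add smul, add x ω₁ = add y ω₂)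


section

variable {𝔽 X : Type*} [Field 𝔽] (add : X → X → X) (smul : 𝔽 → X → X)

theorem nsSub_self_mem_nsOmega (z : X) : nsSub add smul z z ∈ nsOmega add smul :=
  ⟨z, rfl⟩

theorem add_nsSub_self_eq_nsSub_add (hcomm : ∀ a b : X, add a b = add b a)
    (hassoc : ∀ a b c : X, add (add a b) c = add a (add b c)) (x y : X) :
    add x (nsSub add smul y y) = add (nsSub add smul x y) y := by
  rw [nsSub, nsSub, hassoc, hcomm (smul (-1) y)]

end

theorem stmt4_general
    {𝔽 X : Type*} [Field 𝔽] (add : X → X → X) (smul : 𝔽 → X → X)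
    (hcomm : ∀ a b : X, add a b = add b a)
    (hassoc : ∀ a b c : X, add (add a b) c = add a (add b c)) :
    ∀ x y : X, nsSub add smul x y ∈ nsOmega add smul → nsAeq add smul x y := by
  rintro x y ⟨z, hz⟩
  refine Or.inr (Or.inr ⟨_, nsSub_self_mem_nsOmega add smul y,
    _, nsSub_self_mem_nsOmega add smul z, ?_⟩)
  calc add x (nsSub add smul y y)
      = add (nsSub add smul x y) y := add_nsSub_self_eq_nsSub_add add smul hcomm hassoc x y
    _ = add y (nsSub add smul z z) := by rw [hz, hcomm]

/-- In a nonstandard vector space, x ⊖ y ∈ Ω implies x ≗ y. -/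
theorem stmt4
    {𝔽 X : Type*} [Field 𝔽] (add : X → X → X) (smul : 𝔽 → X → X)
    (hcomm : ∀ a b : X, add a b = add b a)
    (hassoc : ∀ a b c : X, add (add a b) c = add a (add b c))
    (hone : ∀ x : X, smul (1 : 𝔽) x = x) :
    ∀ x y : X, nsSub add smul x y ∈ nsOmega add smul → nsAeq add smul x y :=
  stmt4_general add smul hcomm hassoc
end

section
/- Let (X,d) be a pseudo-metric space on a nonstandard vector space with null set Ω, where d is translation-invariant (d(x ⊕ z, y ⊕ z) = d(x,y)). Then B(x; ε) ⊕ x̂ ⊆ B(x ⊕ x̂; ε) for all x, x̂ ∈ X. If additionally d satisfies the null inequalities, X owns the null decomposition, and Ω owns the self-decomposition, then B(x ⊕ x̂; ε) = B(x; ε) ⊕ x̂. -/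
/-- The open ball B(x₀; ε) = {x : d(x, x₀) < ε}. -/
def nsBall {X : Type*} (d : X → X → ℝ) (x₀ : X) (ε : ℝ) : Set X :=
  {x | d x x₀ < ε}


section Translation

variable {X : Type*} (add : X → X → X)

theorem preimage_add_right_nsBall (d : X → X → ℝ)
    (htrans : ∀ x y z : X, d (add x z) (add y z) = d x y) (x x' : X) (ε : ℝ) :
    (fun y => add y x') ⁻¹' nsBall d (add x x') ε = nsBall d x ε := by
  ext y
  simp only [Set.mem_preimage, nsBall, Set.mem_ofPred_eq, htrans]

/-- Writing `y = y' ⊕ ω` and `ω = ω' ⊕ (x' ⊖ x')` exhibits the preimage `(y' ⊕ ω') ⊕ (-1)x'`. -/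
theorem surjective_add_right_of_decomposition {𝔽 : Type*} [Field 𝔽] (smul : 𝔽 → X → X)
    (hcomm : ∀ a b : X, add a b = add b a)
    (hassoc : ∀ a b c : X, add (add a b) c = add a (add b c))
    (hdec : ∀ x : X, ∃ x' : X, ∃ ω ∈ nsOmega add smul, x = add x' ω)
    (hself : ∀ ω₀ ∈ nsOmega add smul, ∀ ω ∈ nsOmega add smul,
        ∃ ω' ∈ nsOmega add smul, ω = add ω' ω₀)
    (x' : X) : Function.Surjective fun y => add y x' := by
  intro y
  obtain ⟨y', ω, hω, rfl⟩ := hdec y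
  obtain ⟨ω', -, rfl⟩ := hself (nsSub add smul x' x') ⟨x', rfl⟩ ω hω
  refine ⟨add (add y' ω') (smul (-1) x'), ?_⟩
  calc add (add (add y' ω') (smul (-1) x')) x'
      = add (add y' ω') (nsSub add smul x' x') := by
        rw [hassoc, hcomm (smul (-1) x') x']; rfl
    _ = add y' (add ω' (nsSub add smul x' x')) := hassoc _ _ _

end Translation

theorem stmt14_general
    {𝔽 X : Type*} [Field 𝔽] (add : X → X → X) (smul : 𝔽 → X → X)
    (hcomm : ∀ a b : X, add a b = add b a)
    (hassoc : ∀ a b c : X, add (add a b) c = add a (add b c))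
    (d : X → X → ℝ)
    (htrans : ∀ x y z : X, d (add x z) (add y z) = d x y) :
    (∀ (x x' : X) (ε : ℝ),
      (fun y => add y x') '' nsBall d x ε ⊆ nsBall d (add x x') ε) ∧
    ((∀ x y : X, ∀ ω₁ ∈ nsOmega add smul, ∀ ω₂ ∈ nsOmega add smul,
        d x y ≤ d (add x ω₁) (add y ω₂)) →
     (∀ x y : X, ∀ ω ∈ nsOmega add smul, d x y ≤ d (add x ω) y) →
     (∀ x y : X, ∀ ω ∈ nsOmega add smul, d x y ≤ d x (add y ω)) →
     (∀ x : X, ∃ x' : X, ∃ ω ∈ nsOmega add smul, x = add x' ω) →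
     (∀ ω₀ ∈ nsOmega add smul, ∀ ω ∈ nsOmega add smul,
        ∃ ω' ∈ nsOmega add smul, ω = add ω' ω₀) →
     ∀ (x x' : X) (ε : ℝ),
       nsBall d (add x x') ε = (fun y => add y x') '' nsBall d x ε) := by
  have hpre := preimage_add_right_nsBall add d htrans
  refine ⟨fun x x' ε => hpre x x' ε ▸ Set.image_preimage_subset _ _, ?_⟩
  intro _ _ _ hdec hself x x' ε
  rw [← hpre x x' ε, Set.image_preimage_eq _
    (surjective_add_right_of_decomposition add smul hcomm hassoc hdec hself x')]

/-- If d is translation-invariant then B(x; ε) ⊕ x̂ ⊆ B(x ⊕ x̂; ε); if moreover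
d satisfies the null inequalities, X owns the null decomposition and Ω owns the
self-decomposition, then B(x ⊕ x̂; ε) = B(x; ε) ⊕ x̂. -/
theorem stmt14
    {𝔽 X : Type*} [Field 𝔽] (add : X → X → X) (smul : 𝔽 → X → X)
    (hcomm : ∀ a b : X, add a b = add b a)
    (hassoc : ∀ a b c : X, add (add a b) c = add a (add b c))
    (hone : ∀ x : X, smul (1 : 𝔽) x = x)
    (d : X → X → ℝ)
    (hd : ∀ x y : X, 0 ≤ d x y)
    (hsymm : ∀ x y : X, d x y = d y x)
    (htri : ∀ x y z : X, d x y ≤ d x z + d z y)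
    (htrans : ∀ x y z : X, d (add x z) (add y z) = d x y) :
    (∀ (x x' : X) (ε : ℝ),
      (fun y => add y x') '' nsBall d x ε ⊆ nsBall d (add x x') ε) ∧
    ((∀ x y : X, ∀ ω₁ ∈ nsOmega add smul, ∀ ω₂ ∈ nsOmega add smul,
        d x y ≤ d (add x ω₁) (add y ω₂)) →
     (∀ x y : X, ∀ ω ∈ nsOmega add smul, d x y ≤ d (add x ω) y) →
     (∀ x y : X, ∀ ω ∈ nsOmega add smul, d x y ≤ d x (add y ω)) →
     (∀ x : X, ∃ x' : X, ∃ ω ∈ nsOmega add smul, x = add x' ω) →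
     (∀ ω₀ ∈ nsOmega add smul, ∀ ω ∈ nsOmega add smul,
        ∃ ω' ∈ nsOmega add smul, ω = add ω' ω₀) →
     ∀ (x x' : X) (ε : ℝ),
       nsBall d (add x x') ε = (fun y => add y x') '' nsBall d x ε) :=
  stmt14_general add smul hcomm hassoc d htrans
end

section
/- Let (X,d) be a pseudo-metric space on a nonstandard vector space with null set Ω, where d satisfies the null equalities and Ω owns the self-decomposition with respect to ω₀ ∈ Ω. Then B(a; ε) ⊕ ω₀ = B(a; ε) ⊕ Ω for every open ball B(a; ε). -/
/-! If every element of `Ω` factors as `ω' ⊕ ω₀` with `ω' ∈ Ω`, then `x ⊕ ω = (x ⊕ ω') ⊕ ω₀`,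
so translating a set `S` that is stable under `⊕ Ω` by `ω₀` already produces all of `S ⊕ Ω`. -/

theorem image_add_right_eq_image2_of_decomp {X : Type*} (add : X → X → X)
    (hassoc : ∀ a b c : X, add (add a b) c = add a (add b c))
    {S Ω : Set X} {ω₀ : X} (hω₀ : ω₀ ∈ Ω)
    (hdecomp : ∀ ω ∈ Ω, ∃ ω' ∈ Ω, ω = add ω' ω₀)
    (hS : ∀ x ∈ S, ∀ ω ∈ Ω, add x ω ∈ S) :
    (fun x => add x ω₀) '' S = Set.image2 add S Ω := by
  ext y
  constructor
  · rintro ⟨x, hx, rfl⟩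
    exact Set.mem_image2_of_mem hx hω₀
  · rintro ⟨x, hx, ω, hω, rfl⟩
    obtain ⟨ω', hω', rfl⟩ := hdecomp ω hω
    exact ⟨add x ω', hS x hx ω' hω', hassoc x ω' ω₀⟩

theorem add_mem_nsBall {X : Type*} (add : X → X → X) (d : X → X → ℝ) {Ω : Set X}
    (hne : ∀ x y : X, ∀ ω ∈ Ω, d (add x ω) y = d x y)
    {a x ω : X} {ε : ℝ} (hx : x ∈ nsBall d a ε) (hω : ω ∈ Ω) :
    add x ω ∈ nsBall d a ε := by
  simpa only [nsBall, Set.mem_ofPred_eq, hne x a ω hω] using hx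

theorem stmt15_general
    {𝔽 X : Type*} [Field 𝔽] (add : X → X → X) (smul : 𝔽 → X → X)
    (hassoc : ∀ a b c : X, add (add a b) c = add a (add b c))
    (d : X → X → ℝ)
    (hne₂ : ∀ x y : X, ∀ ω ∈ nsOmega add smul, d (add x ω) y = d x y)
    (ω₀ : X) (hω₀ : ω₀ ∈ nsOmega add smul)
    (hself₀ : ∀ ω ∈ nsOmega add smul,
      ∃ ω' ∈ nsOmega add smul, ω = add ω' ω₀) :
    ∀ (a : X) (ε : ℝ),
      (fun x => add x ω₀) '' nsBall d a ε =
        Set.image2 add (nsBall d a ε) (nsOmega add smul) := fun _ _ =>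
  image_add_right_eq_image2_of_decomp add hassoc hω₀ hself₀
    fun _ hx _ hω => add_mem_nsBall add d hne₂ hx hω

/-- Under the null equalities, if Ω owns the self-decomposition with respect to
ω₀ ∈ Ω, then B(a; ε) ⊕ ω₀ = B(a; ε) ⊕ Ω. -/
theorem stmt15
    {𝔽 X : Type*} [Field 𝔽] (add : X → X → X) (smul : 𝔽 → X → X)
    (hcomm : ∀ a b : X, add a b = add b a)
    (hassoc : ∀ a b c : X, add (add a b) c = add a (add b c))
    (hone : ∀ x : X, smul (1 : 𝔽) x = x)
    (d : X → X → ℝ)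
    (hd : ∀ x y : X, 0 ≤ d x y)
    (hsymm : ∀ x y : X, d x y = d y x)
    (htri : ∀ x y z : X, d x y ≤ d x z + d z y)
    (hne₁ : ∀ x y : X, ∀ ω₁ ∈ nsOmega add smul, ∀ ω₂ ∈ nsOmega add smul,
      d (add x ω₁) (add y ω₂) = d x y)
    (hne₂ : ∀ x y : X, ∀ ω ∈ nsOmega add smul, d (add x ω) y = d x y)
    (hne₃ : ∀ x y : X, ∀ ω ∈ nsOmega add smul, d x (add y ω) = d x y)
    (ω₀ : X) (hω₀ : ω₀ ∈ nsOmega add smul)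
    (hself₀ : ∀ ω ∈ nsOmega add smul,
      ∃ ω' ∈ nsOmega add smul, ω = add ω' ω₀) :
    ∀ (a : X) (ε : ℝ),
      (fun x => add x ω₀) '' nsBall d a ε =
        Set.image2 add (nsBall d a ε) (nsOmega add smul) :=
  stmt15_general add smul hassoc d hne₂ ω₀ hω₀ hself₀
end

section
/- Let (X,d) be a pseudo-metric space on a nonstandard vector space. Every open ball B(x₀; ε) is nonstandardly open (B(x₀;ε) = int(B(x₀;ε))) and nonstandardly type-III-open; if moreover d satisfies the null equalities, then B(x₀; ε) is nonstandardly type-I-open. -/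
/-- The nonstandard interior of A. -/
def nsInt {X : Type*} (d : X → X → ℝ) (A : Set X) : Set X :=
  {x | x ∈ A ∧ ∃ ε > 0, nsBall d x ε ⊆ A}

/-- The nonstandard type-I interior of A. -/
def nsIntI {𝔽 X : Type*} [Field 𝔽] (add : X → X → X) (smul : 𝔽 → X → X)
    (d : X → X → ℝ) (A : Set X) : Set X :=
  {x | x ∈ A ∧ ∃ ε > 0, Set.image2 add (nsBall d x ε) (nsOmega add smul) ⊆ A}

/-- The nonstandard type-III interior of A. -/
def nsIntIII {𝔽 X : Type*} [Field 𝔽] (add : X → X → X) (smul : 𝔽 → X → X)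
    (d : X → X → ℝ) (A : Set X) : Set X :=
  {x | x ∈ A ∧ ∃ ε > 0, Set.image2 add (nsBall d x ε) (nsOmega add smul) ⊆
    Set.image2 add A (nsOmega add smul)}

/-!
By the triangle inequality, a point `x` of `B(x₀; ε)` carries the smaller ball
`B(x; ε - d(x, x₀))` inside `B(x₀; ε)`; this gives nonstandard openness, and type-III-openness
follows because `· ⊕ Ω` is monotone. Under the null equality `d(x ⊕ ω, y) = d(x, y)` the ball is
stable under `· ⊕ Ω`, which upgrades the same small balls to witnesses of type-I-openness.
-/

section Interior

variable {𝔽 X : Type*} [Field 𝔽] (add : X → X → X) (smul : 𝔽 → X → X) (d : X → X → ℝ)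

theorem nsInt_subset (A : Set X) : nsInt d A ⊆ A := fun _ hx => hx.1

theorem nsIntI_subset (A : Set X) : nsIntI add smul d A ⊆ A := fun _ hx => hx.1

theorem nsIntIII_subset (A : Set X) : nsIntIII add smul d A ⊆ A := fun _ hx => hx.1

theorem nsInt_subset_nsIntIII (A : Set X) : nsInt d A ⊆ nsIntIII add smul d A :=
  fun _ ⟨hx, ε, hε, hball⟩ => ⟨hx, ε, hε, Set.image2_subset_right hball⟩

theorem nsInt_subset_nsIntI {A : Set X} (hA : Set.image2 add A (nsOmega add smul) ⊆ A) :
    nsInt d A ⊆ nsIntI add smul d A :=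
  fun _ ⟨hx, ε, hε, hball⟩ => ⟨hx, ε, hε, (Set.image2_subset_right hball).trans hA⟩

end Interior

section Ball

variable {𝔽 X : Type*} [Field 𝔽] (add : X → X → X) (smul : 𝔽 → X → X) {d : X → X → ℝ}

theorem nsBall_sub_dist_subset (htri : ∀ x y z : X, d x y ≤ d x z + d z y) (x₀ x : X) (ε : ℝ) :
    nsBall d x (ε - d x x₀) ⊆ nsBall d x₀ ε := fun y (hy : d y x < ε - d x x₀) =>
  calc d y x₀ ≤ d y x + d x x₀ := htri y x₀ x
    _ < ε := lt_sub_iff_add_lt.1 hy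

theorem nsInt_nsBall (htri : ∀ x y z : X, d x y ≤ d x z + d z y) (x₀ : X) (ε : ℝ) :
    nsInt d (nsBall d x₀ ε) = nsBall d x₀ ε :=
  (nsInt_subset d _).antisymm fun _ hx =>
    ⟨hx, _, sub_pos.2 hx, nsBall_sub_dist_subset htri x₀ _ ε⟩

theorem nsIntIII_nsBall (htri : ∀ x y z : X, d x y ≤ d x z + d z y) (x₀ : X) (ε : ℝ) :
    nsIntIII add smul d (nsBall d x₀ ε) = nsBall d x₀ ε :=
  (nsIntIII_subset add smul d _).antisymm <|
    (nsInt_nsBall htri x₀ ε).symm.subset.trans (nsInt_subset_nsIntIII add smul d _)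

theorem image2_add_nsBall_nsOmega_subset
    (hnull : ∀ x y : X, ∀ ω ∈ nsOmega add smul, d (add x ω) y = d x y) (x₀ : X) (ε : ℝ) :
    Set.image2 add (nsBall d x₀ ε) (nsOmega add smul) ⊆ nsBall d x₀ ε := by
  rintro _ ⟨x, hx, ω, hω, rfl⟩
  show d (add x ω) x₀ < ε
  rw [hnull x x₀ ω hω]
  exact hx

theorem nsIntI_nsBall (htri : ∀ x y z : X, d x y ≤ d x z + d z y)
    (hnull : ∀ x y : X, ∀ ω ∈ nsOmega add smul, d (add x ω) y = d x y) (x₀ : X) (ε : ℝ) :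
    nsIntI add smul d (nsBall d x₀ ε) = nsBall d x₀ ε :=
  (nsIntI_subset add smul d _).antisymm <|
    (nsInt_nsBall htri x₀ ε).symm.subset.trans <|
      nsInt_subset_nsIntI add smul d (image2_add_nsBall_nsOmega_subset add smul hnull x₀ ε)

end Ball

theorem stmt17_general
    {𝔽 X : Type*} [Field 𝔽] (add : X → X → X) (smul : 𝔽 → X → X)
    (d : X → X → ℝ)
    (htri : ∀ x y z : X, d x y ≤ d x z + d z y) :
    ∀ (x₀ : X) (ε : ℝ), 0 < ε →
      nsBall d x₀ ε = nsInt d (nsBall d x₀ ε) ∧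
      nsBall d x₀ ε = nsIntIII add smul d (nsBall d x₀ ε) ∧
      ((∀ x y : X, ∀ ω₁ ∈ nsOmega add smul, ∀ ω₂ ∈ nsOmega add smul,
          d (add x ω₁) (add y ω₂) = d x y) →
       (∀ x y : X, ∀ ω ∈ nsOmega add smul, d (add x ω) y = d x y) →
       (∀ x y : X, ∀ ω ∈ nsOmega add smul, d x (add y ω) = d x y) →
       nsBall d x₀ ε = nsIntI add smul d (nsBall d x₀ ε)) :=
  fun x₀ ε _ =>
    ⟨(nsInt_nsBall htri x₀ ε).symm, (nsIntIII_nsBall add smul htri x₀ ε).symm,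
      fun _ hnull _ => (nsIntI_nsBall add smul htri hnull x₀ ε).symm⟩

/-- Every open ball is nonstandardly open and nonstandardly type-III-open;
under the null equalities it is also nonstandardly type-I-open. -/
theorem stmt17
    {𝔽 X : Type*} [Field 𝔽] (add : X → X → X) (smul : 𝔽 → X → X)
    (hcomm : ∀ a b : X, add a b = add b a)
    (hassoc : ∀ a b c : X, add (add a b) c = add a (add b c))
    (hone : ∀ x : X, smul (1 : 𝔽) x = x)
    (d : X → X → ℝ)
    (hd : ∀ x y : X, 0 ≤ d x y)
    (hsymm : ∀ x y : X, d x y = d y x)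
    (htri : ∀ x y z : X, d x y ≤ d x z + d z y) :
    ∀ (x₀ : X) (ε : ℝ), 0 < ε →
      nsBall d x₀ ε = nsInt d (nsBall d x₀ ε) ∧
      nsBall d x₀ ε = nsIntIII add smul d (nsBall d x₀ ε) ∧
      ((∀ x y : X, ∀ ω₁ ∈ nsOmega add smul, ∀ ω₂ ∈ nsOmega add smul,
          d (add x ω₁) (add y ω₂) = d x y) →
       (∀ x y : X, ∀ ω ∈ nsOmega add smul, d (add x ω) y = d x y) →
       (∀ x y : X, ∀ ω ∈ nsOmega add smul, d x (add y ω) = d x y) →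
       nsBall d x₀ ε = nsIntI add smul d (nsBall d x₀ ε)) :=
  stmt17_general add smul d htri
end
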